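/- Let (g,γ) be a construction pair on an abelian group (X,+), and equip ℤ × X with the multiplication (i,x)·(j,y) = (i+j, g^{−j}(x)+y+∑_{k∈I(i+j,−j)} g^{−k}(γ(x,y))). For integers i,j and x,y ∈ X, set c = (0, −x+g^{−j}(x)+y−g^{−i}(y)+∑_{k∈I(−i,−j)} g^{−k}(γ(x,y)) + ∑_{k∈I(−i−j,i+j)} g^{−k}(γ(x,y))). Then ((j,y)·(i,x))·c = (i,x)·(j,y); that is, c is the loop commutator [(i,x),(j,y)]. -/

import Mathlib

/-!
Biadditivity, alternation and symmetry give `γ` values of order two, which by (C2) lie in the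
radical `{u | γ u · = 0}`. By (C3) the powers of `g` preserve the radical, and by (C1) they are
additive on it. Hence the radical sums in the product and in `c` drop out of `γ`, leaving
`γ(x,y) + g^{i+j}γ(x,y)` as the only new `γ`-value, and each sum `∑_{k ∈ I(a,b)} g^{-k}γ(x,y)`
equals `F a + F b` with `F a = ∑_{k ∈ I(0,a)} g^{-k}γ(x,y)`, since `I(a,b)` is the symmetric
difference of `I(0,a)` and `I(0,b)`. The `F`-terms then cancel in pairs.
-/

/-- The interval `I(i,j)` of integers: `∅` if `i = j`, `{i,…,j-1}` if `i < j`,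
and `{j,…,i-1}` if `j < i`. -/
noncomputable def I (i j : ℤ) : Finset ℤ := Finset.Ico (min i j) (max i j)

/-- A construction pair `(g, γ)` on an abelian group `(X, +)`. -/
structure IsConstructionPair {X : Type*} [AddCommGroup X]
    (g : Equiv.Perm X) (γ : X → X → X) : Prop where
  symm : ∀ x y, γ x y = γ y x
  alt : ∀ x, γ x x = 0
  add_left : ∀ x y z, γ (x + y) z = γ x z + γ y z
  add_right : ∀ x y z, γ x (y + z) = γ x y + γ x z
  c1 : ∀ x y, g⁻¹ (g x + g y)
      = x + y + γ x y + g⁻¹ (γ x y) + g⁻¹ (g⁻¹ (γ x y))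
  c2 : ∀ x y z, γ (γ x y) z = 0
  c3 : ∀ x y, g⁻¹ (γ x y) = γ (g x) y

/-- The multiplication of `ℤ ⋉_{(g,γ)} X` on `ℤ × X`:
`(i,x)·(j,y) = (i+j, g^{-j}(x) + y + ∑_{k ∈ I(i+j,-j)} g^{-k}(γ(x,y)))`. -/
noncomputable def cmul {X : Type*} [AddCommGroup X] (g : Equiv.Perm X) (γ : X → X → X) :
    ℤ × X → ℤ × X → ℤ × X :=
  fun u v =>
    (u.1 + v.1,
      (g ^ (-v.1)) u.2 + v.2 + ∑ k ∈ I (u.1 + v.1) (-v.1), (g ^ (-k)) (γ u.2 v.2))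

theorem mem_I {a b k : ℤ} : k ∈ I a b ↔ ¬(a ≤ k ↔ b ≤ k) := by
  simp only [I, Finset.mem_Ico]
  omega

theorem I_eq_symmDiff (a b c : ℤ) : I a b = symmDiff (I c a) (I c b) := by
  ext k
  simp only [Finset.mem_symmDiff, mem_I]
  tauto

theorem Finset.sum_symmDiff_of_add_self {α M : Type*} [DecidableEq α] [AddCommMonoid M]
    {f : α → M} (hf : ∀ a, f a + f a = 0) (s t : Finset α) :
    ∑ a ∈ symmDiff s t, f a = ∑ a ∈ s, f a + ∑ a ∈ t, f a := by
  have hinter : ∑ a ∈ s ∩ t, f a + ∑ a ∈ s ∩ t, f a = 0 := by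
    rw [← Finset.sum_add_distrib]
    exact Finset.sum_eq_zero fun a _ => hf a
  have hunion : s ∪ t = symmDiff s t ∪ s ∩ t := (symmDiff_sup_inf s t).symm
  have hdisj : Disjoint (symmDiff s t) (s ∩ t) := disjoint_symmDiff_inf s t
  rw [← Finset.sum_union_inter, hunion, Finset.sum_union hdisj,
    add_assoc, hinter, add_zero]

theorem sum_I_eq_add_of_add_self {M : Type*} [AddCommMonoid M] {f : ℤ → M}
    (hf : ∀ k, f k + f k = 0) (a b c : ℤ) :
    ∑ k ∈ I a b, f k = ∑ k ∈ I c a, f k + ∑ k ∈ I c b, f k := by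
  rw [I_eq_symmDiff a b c, Finset.sum_symmDiff_of_add_self hf]

theorem sum_I_add_right {M : Type*} [AddCommMonoid M] (f : ℤ → M) (a b c : ℤ) :
    ∑ k ∈ I (a + c) (b + c), f k = ∑ k ∈ I a b, f (k + c) := by
  rw [I, I, min_add_add_right, max_add_add_right, Finset.sum_Ico_add']

namespace IsConstructionPair

variable {X : Type*} [AddCommGroup X] {g : Equiv.Perm X} {γ : X → X → X}

def bilin (h : IsConstructionPair g γ) : X →+ X →+ X :=
  AddMonoidHom.mk' (fun x => AddMonoidHom.mk' (γ x) (h.add_right x))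
    fun x y => AddMonoidHom.ext (h.add_left x y)

@[simp]
theorem bilin_apply (h : IsConstructionPair g γ) (x y : X) : h.bilin x y = γ x y := rfl

theorem zero_right (h : IsConstructionPair g γ) (x : X) : γ x 0 = 0 :=
  map_zero (h.bilin x)

theorem neg_right (h : IsConstructionPair g γ) (x y : X) : γ x (-y) = -γ x y :=
  map_neg (h.bilin x) y

theorem add_self (h : IsConstructionPair g γ) (x y : X) : γ x y + γ x y = 0 := by
  have := h.alt (x + y)
  rwa [h.add_left, h.add_right, h.add_right, h.alt, h.alt, h.symm y x, zero_add, add_zero] at this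

theorem gamma_inv_left (h : IsConstructionPair g γ) (x y : X) : γ (g⁻¹ x) y = g (γ x y) := by
  rw [← Equiv.Perm.inv_eq_iff_eq, h.c3, Equiv.Perm.coe_inv, Equiv.apply_symm_apply]

theorem gamma_zpow_left (h : IsConstructionPair g γ) (n : ℤ) (x y : X) :
    γ ((g ^ n) x) y = (g ^ (-n)) (γ x y) := by
  induction n using Int.induction_on generalizing x with
  | zero => simp
  | succ n ih =>
    rw [zpow_add_one, Equiv.Perm.mul_apply, ih, ← h.c3, ← Equiv.Perm.mul_apply, ← zpow_sub_one,
      neg_add']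
  | pred n ih =>
    rw [zpow_sub_one, Equiv.Perm.mul_apply, ih, h.gamma_inv_left, ← Equiv.Perm.mul_apply,
      ← zpow_add_one, neg_sub', sub_neg_eq_add]

theorem gamma_zpow_right (h : IsConstructionPair g γ) (n : ℤ) (x y : X) :
    γ x ((g ^ n) y) = (g ^ (-n)) (γ x y) := by
  rw [h.symm, h.gamma_zpow_left, h.symm]

theorem zpow_apply_zero (h : IsConstructionPair g γ) (n : ℤ) : (g ^ n) 0 = 0 := by
  simpa [h.alt, h.zero_right] using (h.gamma_zpow_left (-n) 0 0).symm

theorem map_add_of_gamma_eq_zero (h : IsConstructionPair g γ) {u v : X} (huv : γ u v = 0) :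
    g (u + v) = g u + g v := by
  have hinv : g⁻¹ (0 : X) = 0 := by simpa using h.zpow_apply_zero (-1)
  have := h.c1 u v
  rw [huv, hinv, hinv, add_zero, add_zero, add_zero] at this
  exact (Equiv.Perm.inv_eq_iff_eq.1 this).symm

def rad (h : IsConstructionPair g γ) : AddSubgroup X := h.bilin.ker

theorem mem_rad (h : IsConstructionPair g γ) {u : X} : u ∈ h.rad ↔ ∀ w, γ u w = 0 := by
  simp [rad, AddMonoidHom.mem_ker, DFunLike.ext_iff]

theorem gamma_mem_rad (h : IsConstructionPair g γ) (x y : X) : γ x y ∈ h.rad :=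
  h.mem_rad.2 (h.c2 x y)

theorem zpow_mem_rad (h : IsConstructionPair g γ) (n : ℤ) {u : X} (hu : u ∈ h.rad) :
    (g ^ n) u ∈ h.rad :=
  h.mem_rad.2 fun w => by rw [h.gamma_zpow_left, h.mem_rad.1 hu, h.zpow_apply_zero]

theorem inv_map_add_of_mem_rad (h : IsConstructionPair g γ) {u : X} (hu : u ∈ h.rad) (v : X) :
    g⁻¹ (u + v) = g⁻¹ u + g⁻¹ v := by
  have hu' : g⁻¹ u ∈ h.rad := by simpa using h.zpow_mem_rad (-1) hu
  rw [Equiv.Perm.inv_eq_iff_eq, h.map_add_of_gamma_eq_zero (h.mem_rad.1 hu' _)]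
  simp only [Equiv.Perm.coe_inv, Equiv.apply_symm_apply]

theorem zpow_map_add_of_mem_rad (h : IsConstructionPair g γ) (n : ℤ) {u v : X}
    (hu : u ∈ h.rad) (hv : v ∈ h.rad) : (g ^ n) (u + v) = (g ^ n) u + (g ^ n) v := by
  induction n using Int.induction_on generalizing u v with
  | zero => simp
  | succ n ih =>
    rw [zpow_add_one, Equiv.Perm.mul_apply, h.map_add_of_gamma_eq_zero (h.mem_rad.1 hu v),
      ih (by simpa using h.zpow_mem_rad 1 hu) (by simpa using h.zpow_mem_rad 1 hv)]
    rfl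
  | pred n ih =>
    rw [zpow_sub_one, Equiv.Perm.mul_apply, h.inv_map_add_of_mem_rad hu v,
      ih (by simpa using h.zpow_mem_rad (-1) hu) (by simpa using h.zpow_mem_rad (-1) hv)]
    rfl

theorem gamma_add_mem_rad_left (h : IsConstructionPair g γ) {r : X} (hr : r ∈ h.rad) (u v : X) :
    γ (u + r) v = γ u v := by
  rw [h.add_left, h.mem_rad.1 hr, add_zero]

theorem gamma_add_mem_rad_right (h : IsConstructionPair g γ) {r : X} (hr : r ∈ h.rad) (u v : X) :
    γ u (v + r) = γ u v := by
  rw [h.add_right, h.symm u r, h.mem_rad.1 hr, add_zero]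

theorem zpow_gamma_add_self (h : IsConstructionPair g γ) (n : ℤ) (x y : X) :
    (g ^ n) (γ x y) + (g ^ n) (γ x y) = 0 := by
  rw [← neg_neg n, ← h.gamma_zpow_left, h.add_self]

theorem gamma_swap_mul_commutator (h : IsConstructionPair g γ) (i j : ℤ) (x y : X) :
    γ ((g ^ (-i)) y + x) (-x + (g ^ (-j)) x + y - (g ^ (-i)) y)
      = γ x y + (g ^ (i + j)) (γ x y) := by
  simp only [sub_eq_add_neg, h.add_left, h.add_right, h.neg_right, h.gamma_zpow_left,
    h.gamma_zpow_right, h.alt, h.symm y x, h.zpow_apply_zero, neg_neg, neg_zero, add_zero, zero_add]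
  rw [← Equiv.Perm.mul_apply, ← zpow_add]
  linear_combination (norm := module) -h.zpow_gamma_add_self i x y

theorem sum_I_zpow_apply_gamma_add_zpow (h : IsConstructionPair g γ) (a b n : ℤ) (x y : X) :
    ∑ k ∈ I a b, (g ^ (-k)) (γ x y + (g ^ n) (γ x y))
      = ∑ k ∈ I a b, (g ^ (-k)) (γ x y) + ∑ k ∈ I (a - n) (b - n), (g ^ (-k)) (γ x y) := by
  have hγ := h.gamma_mem_rad x y
  simp only [h.zpow_map_add_of_mem_rad _ hγ (h.zpow_mem_rad n hγ), Finset.sum_add_distrib,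
    sub_eq_add_neg, sum_I_add_right, ← Equiv.Perm.mul_apply, ← zpow_add, neg_add, neg_neg]

end IsConstructionPair

theorem stmt_10 {X : Type*} [AddCommGroup X] (g : Equiv.Perm X) (γ : X → X → X)
    (h : IsConstructionPair g γ) (i j : ℤ) (x y : X)
    (c : ℤ × X)
    (hc : c = ((0 : ℤ),
      -x + (g ^ (-j)) x + y - (g ^ (-i)) y
        + ∑ k ∈ I (-i) (-j), (g ^ (-k)) (γ x y)
        + ∑ k ∈ I (-(i + j)) (i + j), (g ^ (-k)) (γ x y))) :
    cmul g γ (cmul g γ (j, y) (i, x)) c = cmul g γ (i, x) (j, y) := by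
  subst hc
  have hsum_mem_rad (a b : ℤ) : ∑ k ∈ I a b, (g ^ (-k)) (γ x y) ∈ h.rad :=
    AddSubgroup.sum_mem _ fun k _ => h.zpow_mem_rad (-k) (h.gamma_mem_rad x y)
  set F : ℤ → X := fun a => ∑ k ∈ I 0 a, (g ^ (-k)) (γ x y)
  have hI (a b : ℤ) : ∑ k ∈ I a b, (g ^ (-k)) (γ x y) = F a + F b :=
    sum_I_eq_add_of_add_self (fun k => h.zpow_gamma_add_self (-k) x y) a b 0
  have hF (a : ℤ) : F a + F a = 0 := by simpa [I] using (hI a a).symm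
  have hF0 : F 0 = 0 := by simp [F, I]
  simp only [cmul, add_zero, neg_zero, zpow_zero, Equiv.Perm.one_apply, add_comm j i, h.symm y x]
  rw [h.gamma_add_mem_rad_left (hsum_mem_rad _ _), h.gamma_add_mem_rad_right (hsum_mem_rad _ _),
    h.gamma_add_mem_rad_right (hsum_mem_rad _ _), h.gamma_swap_mul_commutator,
    h.sum_I_zpow_apply_gamma_add_zpow]
  simp only [hI, sub_self, zero_sub, hF0]
  refine Prod.ext rfl ?_
  linear_combination (norm := module) hF (i + j) + hF (-i) + hF (-(i + j))
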